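/- For a fixed real number \sigma > 0 and real vectors u, \lambda, with bounds u_a \le u_b, the componentwise conditions (\lambda_a \ge 0, u_a \le u, \lambda_a^T (u_a - u) = 0) and (\lambda_b \ge 0, u \le u_b, \lambda_b^T (u - u_b) = 0) with \lambda = \lambda_b - \lambda_a hold for some nonnegative \lambda_a, \lambda_b if and only if \lambda - \max\{0, \lambda + \sigma(u - u_b)\} - \min\{0, \lambda - \sigma(u_a - u)\} = 0 componentwise. -/
import Mathlib


theorem stmt_1 (σ u lam ua ub : ℝ) (hσ : 0 < σ) (hab : ua ≤ ub) :
    (∃ lama lamb : ℝ, 0 ≤ lama ∧ 0 ≤ lamb ∧ lam = lamb - lama ∧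
        ua ≤ u ∧ lama * (ua - u) = 0 ∧
        u ≤ ub ∧ lamb * (u - ub) = 0) ↔
      lam - max 0 (lam + σ * (u - ub)) - min 0 (lam - σ * (ua - u)) = 0 := by
  constructor
  · rintro ⟨la, lb, hla, hlb, rfl, hua, hca, hub, hcb⟩
    rcases mul_eq_zero.1 hca with hA | hA <;> rcases mul_eq_zero.1 hcb with hB | hB <;>
      rw [max_def, min_def] <;> split_ifs <;>
      nlinarith [mul_nonneg hσ.le (sub_nonneg.2 hua), mul_nonneg hσ.le (sub_nonneg.2 hub)]
  · intro h
    rw [max_def, min_def] at h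
    split_ifs at h with h1 h2 h2
    · have h3 : u = ub := by
        have h4 : σ * (u - ub) = 0 := by linarith
        rcases mul_eq_zero.1 h4 with h5 | h5
        · exact absurd h5 (ne_of_gt hσ)
        · linarith
      subst h3
      exact ⟨0, lam, le_rfl, by nlinarith, by ring, by linarith, by ring, le_rfl, by ring⟩
    · push_neg at h2
      exact absurd h (by intro h; nlinarith [mul_le_mul_of_nonneg_left hab hσ.le])
    · push_neg at h1
      have hl0 : lam = 0 := by linarith
      have h3 : ua ≤ u := by
        by_contra hc; push_neg at hc
        linarith [mul_pos hσ (sub_pos.2 hc)]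
      have h4 : u ≤ ub := by
        by_contra hc; push_neg at hc
        linarith [mul_nonneg hσ.le (sub_nonneg.2 hc.le)]
      exact ⟨0, 0, le_rfl, le_rfl, by linarith, h3, by ring, h4, by ring⟩
    · push_neg at h1 h2
      have h3 : ua = u := by
        have h4 : σ * (ua - u) = 0 := by linarith
        rcases mul_eq_zero.1 h4 with h5 | h5
        · exact absurd h5 (ne_of_gt hσ)
        · linarith
      subst h3
      exact ⟨-lam, 0, by nlinarith, le_rfl, by ring, le_rfl, by ring, hab, by ring⟩
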